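/- Spectral formula for the N-walk generating function (Lemma 3): under the one-walk Bethe hypotheses, for every t ≥ 0, y^i ∈ U^{p'}_L(N) and y^f ∈ U^p_L(N) (where p' = p if t is even and p' is the opposite parity to p if t is odd), Z^N_t(y^i → y^f) = V(y^i) · Σ_{k ∈ K_N} Φ^{p'}_k(y^i) Λ_k^t Ψ^p_k(y^f)*, where V(y^i) = ∏_{α=1}^N v(y^i_α). -/

import Mathlib

open Finset BigOperators
open scoped Classical

noncomputable section

/-- The odd sites of the strip: `{y : 1 ≤ y ≤ L, y odd}`. -/
def SetO (L : ℤ) : Finset ℤ := (Finset.Icc 1 L).filter (fun y => Odd y)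

/-- The even sites of the strip: `{y : 0 ≤ y ≤ L, y even}`. -/
def SetE (L : ℤ) : Finset ℤ := (Finset.Icc 0 L).filter (fun y => Even y)

/-- Parity-indexed site sets: `true ↦ odd`, `false ↦ even`. -/
def Sp (L : ℤ) : Bool → Finset ℤ := fun p => if p then SetO L else SetE L

/-- Strictly increasing `N`-tuples with entries in `S`. -/
def UU {α : Type*} [LinearOrder α] (S : Finset α) (N : ℕ) : Finset (Fin N → α) :=
  (Fintype.piFinset (fun _ => S)).filter (fun y => ∀ i j : Fin N, i < j → y i < y j)

/-- One-step transfer matrix entry: `w y y'` when `|y - y'| = 1`, and `0` otherwise. -/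
def T1 (w : ℤ → ℤ → ℂ) (y y' : ℤ) : ℂ := if |y - y'| = 1 then w y y' else 0

/-- `N`-walk transfer matrix entry: product of one-step entries. -/
def TN (w : ℤ → ℤ → ℂ) {N : ℕ} (y y' : Fin N → ℤ) : ℂ := ∏ i, T1 w (y i) (y' i)

/-- Powers of a matrix indexed by a finite set `S`. -/
def matPow {α : Type*} [DecidableEq α] (S : Finset α) (M : α → α → ℂ) : ℕ → α → α → ℂ
  | 0 => fun y y' => if y = y' then 1 else 0
  | r + 1 => fun y y' => ∑ z ∈ S, matPow S M r y z * M z y'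

/-- Weight of a family of `N` walks of length `t`. -/
def walkWeight (w : ℤ → ℤ → ℂ) (v : ℤ → ℂ) {N t : ℕ} (y : Fin N → Fin (t + 1) → ℤ) : ℂ :=
  (∏ j, v (y j 0)) * ∏ m : Fin t, ∏ j, w (y j m.castSucc) (y j m.succ)

/-- The constraints on families of non-intersecting walks in the strip `0 ≤ y ≤ L`. -/
def stripCond (L : ℤ) {N t : ℕ} (yi yf : Fin N → ℤ) (y : Fin N → Fin (t + 1) → ℤ) : Prop :=
  (∀ j, y j 0 = yi j) ∧ (∀ j, y j (Fin.last t) = yf j) ∧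
    (∀ j m, 0 ≤ y j m ∧ y j m ≤ L) ∧
    (∀ j, ∀ m : Fin t, y j m.succ = y j m.castSucc + 1 ∨ y j m.succ = y j m.castSucc - 1) ∧
    (∀ m, ∀ i j : Fin N, i < j → y i m < y j m)

/-- The `N`-walk strip generating function `Z^N_t(y^i → y^f)`. -/
def Zgen (L : ℤ) (w : ℤ → ℤ → ℂ) (v : ℤ → ℂ) (N t : ℕ) (yi yf : Fin N → ℤ) : ℂ :=
  ∑ y ∈ (Fintype.piFinset
      (fun _ : Fin N => Fintype.piFinset (fun _ : Fin (t + 1) => Finset.Icc 0 L))).filter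
        (stripCond L yi yf), walkWeight w v y

/-- The constraints on families of non-intersecting walks with a single wall `y ≥ 0`. -/
def barCond {N t : ℕ} (yi yf : Fin N → ℤ) (y : Fin N → Fin (t + 1) → ℤ) : Prop :=
  (∀ j, y j 0 = yi j) ∧ (∀ j, y j (Fin.last t) = yf j) ∧
    (∀ j m, 0 ≤ y j m) ∧
    (∀ j, ∀ m : Fin t, y j m.succ = y j m.castSucc + 1 ∨ y j m.succ = y j m.castSucc - 1) ∧
    (∀ m, ∀ i j : Fin N, i < j → y i m < y j m)

/-- The one-wall `N`-walk generating function `Z̄^N_t(y^i → y^f)`. -/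
def Zbar (w : ℤ → ℤ → ℂ) (v : ℤ → ℂ) (N t : ℕ) (yi yf : Fin N → ℤ) : ℂ :=
  ∑ᶠ (y : Fin N → Fin (t + 1) → ℤ) (_ : barCond yi yf y), walkWeight w v y

/-- The Bethe Ansatz determinant built from a family of one-walk vectors. -/
def BA {K X : Type*} {N : ℕ} (φ : K → X → ℂ) (k : Fin N → K) (y : Fin N → X) : ℂ :=
  ∑ σ : Equiv.Perm (Fin N), ((Equiv.Perm.sign σ : ℤ) : ℂ) * ∏ a, φ (k (σ a)) (y a)

end

/-!
Deleting the last step of a family of walks gives the transfer-matrix recursion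
`Z_{t+1}(yⁱ → y) = ∑_z Z_t(yⁱ → z) T^N(z, y)`, with `z` running over the increasing tuples of the
opposite parity and `T^N` the product of one-walk transfer matrices. Biorthogonality and
completeness make `ψ_k*` a left eigenvector of the one-walk transfer matrix, and then the
antisymmetrisation `Ψ_k*` is a left eigenvector of the recursion with eigenvalue `Λ_k`: the sum over
increasing `z` extends to all `z`, because sites of one parity are at least 2 apart, so a
non-increasing `z` with `T^N(z, y) ≠ 0` repeats an entry and `Ψ_k(z) = 0`; over all `z` the sum
factorises by multilinearity of the determinant. Induction on `t` thus reduces the formula to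
`t = 0`, i.e. to `∑_k Φ_k(y) Ψ_k(y')* = δ_{y y'}`, which is the one-walk completeness relation
lifted to determinants by Cauchy–Binet.
-/

open Function

theorem abs_sub_eq_one_iff {a b : ℤ} : |a - b| = 1 ↔ b = a + 1 ∨ b = a - 1 := by
  rw [abs_eq zero_le_one]
  omega

theorem mem_UU {α : Type*} [LinearOrder α] {S : Finset α} {N : ℕ} {y : Fin N → α} :
    y ∈ UU S N ↔ (∀ i, y i ∈ S) ∧ StrictMono y := by
  simp [UU, StrictMono]

theorem mem_Sp {L y : ℤ} {p : Bool} :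
    y ∈ Sp L p ↔ (0 ≤ y ∧ y ≤ L) ∧ (y % 2 = 1 ↔ p = true) := by
  cases p
  · simp [Sp, SetE, Int.even_iff]
  · simp [Sp, SetO, Int.odd_iff]
    omega

theorem mem_Sp_not_of_abs_sub_eq_one {L y y' : ℤ} {p : Bool} (hy' : y' ∈ Sp L p)
    (hy : 0 ≤ y ∧ y ≤ L) (h : |y - y'| = 1) : y ∈ Sp L (!p) := by
  rw [mem_Sp] at hy' ⊢
  rw [abs_sub_eq_one_iff] at h
  cases p <;>
    simp only [Bool.not_true, Bool.not_false, Bool.false_eq_true, iff_true, iff_false] at hy' ⊢ <;>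
    omega

theorem add_two_le_of_mem_UU_Sp {L : ℤ} {p : Bool} {N : ℕ} {y : Fin N → ℤ}
    (hy : y ∈ UU (Sp L p) N) {a b : Fin N} (hab : a < b) : y a + 2 ≤ y b := by
  obtain ⟨hmem, hmono⟩ := mem_UU.mp hy
  have ha := mem_Sp.mp (hmem a)
  have hb := mem_Sp.mp (hmem b)
  have := hmono hab
  cases p <;> simp at ha hb <;> omega

theorem sum_eq_sum_UU_sum_perm {K M : Type*} [Fintype K] [LinearOrder K] [AddCommMonoid M]
    {N : ℕ} (F : (Fin N → K) → M) (hF : ∀ k, ¬ Injective k → F k = 0) :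
    ∑ k, F k = ∑ k ∈ UU univ N, ∑ σ : Equiv.Perm (Fin N), F (k ∘ σ) := by
  rw [← Finset.sum_product', ← Finset.sum_filter_of_ne (p := Injective)
    fun k _ hk => by_contra fun hinj => hk (hF k hinj)]
  symm
  refine Finset.sum_nbij (fun kσ => kσ.1 ∘ kσ.2) ?_ ?_ ?_ fun _ _ => rfl
  · rintro ⟨k, σ⟩ hkσ
    simp only [Finset.mem_product, mem_UU] at hkσ
    simpa using hkσ.1.2.injective.comp σ.injective
  · rintro ⟨k, σ⟩ hkσ ⟨k', σ'⟩ hkσ' (h : k ∘ σ = k' ∘ σ')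
    simp only [Finset.coe_product, Set.mem_prod, Finset.mem_coe, mem_UU] at hkσ hkσ'
    have hk : k = k' := by
      rw [← hkσ.1.2.range_inj hkσ'.1.2, ← σ.surjective.range_comp k,
        ← σ'.surjective.range_comp k', h]
    subst hk
    have hσ : σ = σ' := Equiv.ext fun a => hkσ.1.2.injective (congrFun h a)
    rw [hσ]
  · intro f hf
    simp only [Finset.coe_filter, Finset.mem_univ, true_and, Set.mem_ofPred_eq] at hf
    refine ⟨(f ∘ Tuple.sort f, (Tuple.sort f)⁻¹), ?_, ?_⟩
    · simpa [mem_UU] using (Tuple.monotone_sort f).strictMono_of_injective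
        (hf.comp (Tuple.sort f).injective)
    · ext a
      simp

namespace Matrix

variable {n X R : Type*} [Fintype n] [DecidableEq n] [CommRing R]

theorem det_of_sum_mul (s : Finset X) (A : n → X → R) (B : X → n → R) :
    det (of fun i j => ∑ x ∈ s, A i x * B x j) =
      ∑ r ∈ Fintype.piFinset fun _ => s, (∏ j, B (r j) j) * det (of fun i j => A i (r j)) := by
  rw [← det_transpose]
  have := (detRowAlternating : (n → R) [⋀^n]→ₗ[R] R).toMultilinearMap.map_sum_finset
    (fun j x => B x j • fun i => A i x) (fun _ => s)
  simp only [MultilinearMap.map_smul_univ] at this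
  convert this using 2 with r
  · change det _ = det _
    congr 1
    ext j i
    simp [Finset.sum_apply, mul_comm]
  · rw [smul_eq_mul, ← det_transpose]
    rfl

theorem det_mul_eq_sum_det_mul_det {K : Type*} [Fintype K] [LinearOrder K] {N : ℕ}
    (A : Matrix (Fin N) K R) (B : Matrix K (Fin N) R) :
    (A * B).det = ∑ k ∈ UU univ N, (A.submatrix id k).det * (B.submatrix k id).det := by
  have hexpand : (A * B).det = ∑ k, (∏ j, B (k j) j) * (A.submatrix id k).det :=
    det_of_sum_mul univ A B
  rw [hexpand, sum_eq_sum_UU_sum_perm]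
  · refine Finset.sum_congr rfl fun k _ => ?_
    have hperm (σ : Equiv.Perm (Fin N)) : (A.submatrix id (k ∘ σ)).det =
        Equiv.Perm.sign σ * (A.submatrix id k).det := det_permute' σ (A.submatrix id k)
    simp_rw [hperm, det_apply' (B.submatrix k id), Finset.mul_sum]
    refine Finset.sum_congr rfl fun σ _ => ?_
    simp only [submatrix_apply, id, Function.comp_apply]
    ring
  · intro k hk
    obtain ⟨a, b, hab, hne⟩ : ∃ a b, k a = k b ∧ a ≠ b := by
      simpa [Injective] using hk
    rw [det_zero_of_column_eq hne fun i => by simp [hab], mul_zero]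

theorem det_of_eq_boole {α : Type*} [LinearOrder α] {N : ℕ} {y y' : Fin N → α}
    (hy : StrictMono y) (hy' : StrictMono y') :
    det (of fun a b => if y a = y' b then (1 : R) else 0) = if y = y' then 1 else 0 := by
  split_ifs with h
  · subst h
    convert det_one (R := R) (n := Fin N)
    ext a b
    simp [one_apply, hy.injective.eq_iff]
  · by_contra hdet
    have hrow (a : Fin N) : ∃ b, y a = y' b := by
      by_contra! hne
      exact hdet (det_eq_zero_of_row_eq_zero a fun b => by simp [hne b])
    have hcol (b : Fin N) : ∃ a, y a = y' b := by
      by_contra! hne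
      exact hdet (det_eq_zero_of_column_eq_zero b fun a => by simp [hne a])
    refine h ((hy.range_inj hy').mp (Set.ext fun x => ⟨?_, ?_⟩))
    · rintro ⟨a, rfl⟩
      obtain ⟨b, hb⟩ := hrow a
      exact ⟨b, hb.symm⟩
    · rintro ⟨b, rfl⟩
      obtain ⟨a, ha⟩ := hcol b
      exact ⟨a, ha⟩

end Matrix

theorem BA_eq_det {K X : Type*} {N : ℕ} (φ : K → X → ℂ) (k : Fin N → K) (y : Fin N → X) :
    BA φ k y = Matrix.det (Matrix.of fun a b => φ (k a) (y b)) := by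
  rw [Matrix.det_apply, BA]
  refine Finset.sum_congr rfl fun σ _ => ?_
  simp [Units.smul_def, zsmul_eq_mul]

theorem injective_of_BA_ne_zero {K X : Type*} {N : ℕ} {φ : K → X → ℂ} {k : Fin N → K}
    {y : Fin N → X} (h : BA φ k y ≠ 0) : Injective y := by
  intro a b hab
  by_contra hne
  rw [BA_eq_det, Matrix.det_zero_of_column_eq hne fun i => by simp [hab]] at h
  exact h rfl

theorem star_BA {K X : Type*} {N : ℕ} (φ : K → X → ℂ) (k : Fin N → K) (y : Fin N → X) :
    star (BA φ k y) = BA (fun κ x => star (φ κ x)) k y := by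
  simp [BA, star_sum, star_prod]

theorem sum_BA_mul_BA {K X : Type*} [Fintype K] [LinearOrder K] [LinearOrder X] {N : ℕ}
    {S : Finset X} {φ χ : K → X → ℂ}
    (hcomp : ∀ y ∈ S, ∀ y' ∈ S, ∑ k, φ k y * χ k y' = if y = y' then 1 else 0)
    {y y' : Fin N → X} (hy : y ∈ UU S N) (hy' : y' ∈ UU S N) :
    ∑ k ∈ UU univ N, BA φ k y * BA χ k y' = if y = y' then 1 else 0 := by
  rw [mem_UU] at hy hy'
  let A : Matrix (Fin N) K ℂ := .of fun a k => φ k (y a)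
  let B : Matrix K (Fin N) ℂ := .of fun k b => χ k (y' b)
  calc ∑ k ∈ UU univ N, BA φ k y * BA χ k y'
      = (A * B).det := by
        rw [Matrix.det_mul_eq_sum_det_mul_det]
        refine Finset.sum_congr rfl fun k _ => ?_
        rw [BA_eq_det, BA_eq_det, ← Matrix.det_transpose]
        rfl
    _ = Matrix.det (.of fun a b => if y a = y' b then 1 else 0) := by
        congr 1
        ext a b
        exact hcomp _ (hy.1 a) _ (hy'.1 b)
    _ = if y = y' then 1 else 0 := Matrix.det_of_eq_boole hy.2 hy'.2

theorem sum_dual_mul_eq_of_eigen {X K R : Type*} [Fintype K] [DecidableEq K] [DecidableEq X]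
    [CommRing R] {S S' : Finset X} {T : X → X → R} {φ φ' χ χ' : K → X → R} {lam : K → R}
    (heig : ∀ k, ∀ y ∈ S, ∑ y' ∈ S', T y y' * φ' k y' = lam k * φ k y)
    (hort : ∀ k k', ∑ y ∈ S, χ k y * φ k' y = if k = k' then 1 else 0)
    (hcomp : ∀ y ∈ S', ∀ y' ∈ S', ∑ k, φ' k y * χ' k y' = if y = y' then 1 else 0)
    (k : K) {y' : X} (hy' : y' ∈ S') :
    ∑ y ∈ S, χ k y * T y y' = lam k * χ' k y' := by
  have hmatrix (k' : K) : ∑ y ∈ S, ∑ y'' ∈ S', χ k y * T y y'' * φ' k' y'' =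
      lam k' * if k = k' then 1 else 0 := by
    calc ∑ y ∈ S, ∑ y'' ∈ S', χ k y * T y y'' * φ' k' y''
        = ∑ y ∈ S, lam k' * (χ k y * φ k' y) := Finset.sum_congr rfl fun y hy => by
          rw [mul_left_comm, ← heig k' y hy, Finset.mul_sum]
          simp only [mul_assoc]
      _ = lam k' * if k = k' then 1 else 0 := by rw [← Finset.mul_sum, hort]
  calc ∑ y ∈ S, χ k y * T y y'
      = ∑ y ∈ S, ∑ y'' ∈ S', χ k y * T y y'' * if y'' = y' then 1 else 0 := by
        simp [Finset.sum_ite_eq', hy']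
    _ = ∑ y ∈ S, ∑ y'' ∈ S', χ k y * T y y'' * ∑ k', φ' k' y'' * χ' k' y' :=
        Finset.sum_congr rfl fun y _ => Finset.sum_congr rfl fun y'' hy'' => by
          rw [hcomp y'' hy'' y' hy']
    _ = ∑ k', (∑ y ∈ S, ∑ y'' ∈ S', χ k y * T y y'' * φ' k' y'') * χ' k' y' := by
        simp_rw [Finset.mul_sum, Finset.sum_mul, mul_assoc]
        rw [Finset.sum_comm (s := (Finset.univ : Finset K))]
        exact Finset.sum_congr rfl fun y _ => Finset.sum_comm
    _ = lam k * χ' k y' := by simp [hmatrix]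

theorem abs_sub_eq_one_of_T1_ne_zero {w : ℤ → ℤ → ℂ} {y y' : ℤ} (h : T1 w y y' ≠ 0) :
    |y - y'| = 1 := by
  by_contra hne
  exact h (if_neg hne)

theorem abs_sub_eq_one_of_TN_ne_zero {w : ℤ → ℤ → ℂ} {N : ℕ} {z y : Fin N → ℤ}
    (h : TN w z y ≠ 0) (j : Fin N) : |z j - y j| = 1 :=
  abs_sub_eq_one_of_T1_ne_zero (Finset.prod_ne_zero_iff.mp h j (Finset.mem_univ j))

theorem TN_eq_prod {w : ℤ → ℤ → ℂ} {N : ℕ} {z y : Fin N → ℤ} (h : ∀ j, |z j - y j| = 1) :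
    TN w z y = ∏ j, w (z j) (y j) :=
  Finset.prod_congr rfl fun j _ => if_pos (h j)

theorem sum_BA_mul_TN {K : Type*} {w : ℤ → ℤ → ℂ} {N : ℕ} {S S' : Finset ℤ}
    {χ χ' : K → ℤ → ℂ} {lam : K → ℂ}
    (hleft : ∀ κ, ∀ y' ∈ S', ∑ x ∈ S, χ κ x * T1 w x y' = lam κ * χ' κ y')
    (k : Fin N → K) {yf : Fin N → ℤ} (hyf : ∀ a, yf a ∈ S')
    (hgap : ∀ a b, a < b → yf a + 2 ≤ yf b) :
    ∑ z ∈ UU S N, BA χ k z * TN w z yf = (∏ a, lam (k a)) * BA χ' k yf := by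
  have hmono (z : Fin N → ℤ) (h : BA χ k z * TN w z yf ≠ 0) : StrictMono z := by
    refine Monotone.strictMono_of_injective (fun a b hab => ?_)
      (injective_of_BA_ne_zero (left_ne_zero_of_mul h))
    obtain rfl | hlt := hab.eq_or_lt
    · rfl
    have ha := abs_le.mp (abs_sub_eq_one_of_TN_ne_zero (right_ne_zero_of_mul h) a).le
    have hb := abs_le.mp (abs_sub_eq_one_of_TN_ne_zero (right_ne_zero_of_mul h) b).le
    linarith [hgap a b hlt]
  calc ∑ z ∈ UU S N, BA χ k z * TN w z yf
      = ∑ z ∈ Fintype.piFinset fun _ => S, BA χ k z * TN w z yf :=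
        Finset.sum_filter_of_ne fun z _ h => hmono z h
    _ = Matrix.det (.of fun a b => ∑ x ∈ S, χ (k a) x * T1 w x (yf b)) := by
        rw [Matrix.det_of_sum_mul]
        refine Finset.sum_congr rfl fun z _ => ?_
        rw [BA_eq_det, mul_comm]
        rfl
    _ = Matrix.det (.of fun a b => lam (k a) * χ' (k a) (yf b)) := by
        simp_rw [hleft _ _ (hyf _)]
    _ = (∏ a, lam (k a)) * BA χ' k yf := by
        rw [BA_eq_det]
        exact Matrix.det_mul_column _ _

theorem sum_sum_BA_mul_TN {K : Type*} {w : ℤ → ℤ → ℂ} {N : ℕ} {S S' : Finset ℤ}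
    {χ χ' : K → ℤ → ℂ} {lam : K → ℂ}
    (hleft : ∀ κ, ∀ y' ∈ S', ∑ x ∈ S, χ κ x * T1 w x y' = lam κ * χ' κ y')
    (s : Finset (Fin N → K)) (c : (Fin N → K) → ℂ) {yf : Fin N → ℤ} (hyf : ∀ a, yf a ∈ S')
    (hgap : ∀ a b, a < b → yf a + 2 ≤ yf b) :
    ∑ z ∈ UU S N, (∑ k ∈ s, c k * BA χ k z) * TN w z yf =
      ∑ k ∈ s, c k * (∏ a, lam (k a)) * BA χ' k yf := by
  simp_rw [Finset.sum_mul, mul_assoc]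
  rw [Finset.sum_comm]
  simp_rw [← Finset.mul_sum, sum_BA_mul_TN hleft _ hyf hgap]

theorem stripCond_snoc_iff {L : ℤ} {N t : ℕ} {yi yf : Fin N → ℤ}
    {u : Fin N → Fin (t + 1) → ℤ} :
    stripCond L yi yf (fun j => Fin.snoc (u j) (yf j)) ↔
      stripCond L yi (fun j => u j (Fin.last t)) u ∧ (∀ j, 0 ≤ yf j ∧ yf j ≤ L) ∧
        (∀ j, |u j (Fin.last t) - yf j| = 1) ∧ StrictMono yf := by
  simp only [stripCond, Fin.forall_fin_succ' (n := t + 1), Fin.forall_fin_succ' (n := t),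
    ← Fin.castSucc_zero, Fin.snoc_castSucc, Fin.snoc_last, Fin.succ_last, Fin.succ_castSucc,
    abs_sub_eq_one_iff, forall_and, StrictMono]
  tauto

theorem walkWeight_snoc (w : ℤ → ℤ → ℂ) (v : ℤ → ℂ) {N t : ℕ} (u : Fin N → Fin (t + 1) → ℤ)
    (yf : Fin N → ℤ) :
    walkWeight w v (fun j => Fin.snoc (u j) (yf j)) =
      walkWeight w v u * ∏ j, w (u j (Fin.last t)) (yf j) := by
  have h0 (j : Fin N) : (Fin.snoc (u j) (yf j) : Fin (t + 2) → ℤ) 0 = u j 0 :=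
    Fin.snoc_castSucc (i := 0) ..
  simp only [walkWeight, Fin.prod_univ_castSucc (n := t), h0, Fin.snoc_castSucc,
    Fin.succ_castSucc, Fin.succ_last, Fin.snoc_last, mul_assoc]

theorem mem_filter_stripCond {L : ℤ} {N t : ℕ} {yi yf : Fin N → ℤ}
    {y : Fin N → Fin (t + 1) → ℤ} :
    y ∈ (Fintype.piFinset fun _ : Fin N =>
        Fintype.piFinset fun _ : Fin (t + 1) => Finset.Icc 0 L).filter (stripCond L yi yf) ↔
      stripCond L yi yf y := by
  simp only [Finset.mem_filter, Fintype.mem_piFinset, Finset.mem_Icc, and_iff_right_iff_imp]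
  exact fun h j m => h.2.2.1 j m

theorem Zgen_zero {L : ℤ} (w : ℤ → ℤ → ℂ) (v : ℤ → ℂ) {N : ℕ} {yi : Fin N → ℤ}
    (hyi : ∀ j, 0 ≤ yi j ∧ yi j ≤ L) (hmono : StrictMono yi) (yf : Fin N → ℤ) :
    Zgen L w v N 0 yi yf = if yi = yf then ∏ a, v (yi a) else 0 := by
  have hcond (y : Fin N → Fin 1 → ℤ) :
      stripCond L yi yf y ↔ y = (fun j _ => yi j) ∧ yi = yf := by
    constructor
    · rintro ⟨hstart, hend, -⟩
      refine ⟨funext₂ fun j m => ?_, funext fun j => ?_⟩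
      · rw [Subsingleton.elim m 0, hstart]
      · rw [← hstart j, ← hend j]
        rfl
    · rintro ⟨rfl, rfl⟩
      exact ⟨fun _ => rfl, fun _ => rfl, fun j _ => hyi j, fun _ m => m.elim0, fun _ => hmono⟩
  rw [Zgen, Finset.sum_filter]
  simp_rw [hcond, ite_and]
  rw [Finset.sum_ite_eq']
  split_ifs with hmem h h <;> simp_all [walkWeight]

theorem Zgen_succ {L : ℤ} (w : ℤ → ℤ → ℂ) (v : ℤ → ℂ) {N t : ℕ} {p : Bool} (yi : Fin N → ℤ)
    {yf : Fin N → ℤ} (hyf : yf ∈ UU (Sp L p) N) :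
    Zgen L w v N (t + 1) yi yf = ∑ z ∈ UU (Sp L (!p)) N, Zgen L w v N t yi z * TN w z yf := by
  have hyf' := mem_UU.mp hyf
  simp only [Zgen, Finset.sum_mul]
  rw [Finset.sum_sigma']
  symm
  refine Finset.sum_bij_ne_zero (fun zu _ _ j => Fin.snoc (zu.2 j) (yf j)) ?_ ?_ ?_ ?_
  · rintro ⟨z, u⟩ hzu hne
    simp only [Finset.mem_sigma, mem_filter_stripCond] at hzu ⊢
    obtain ⟨-, hwalk⟩ := hzu
    obtain rfl : z = fun j => u j (Fin.last t) := (funext hwalk.2.1).symm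
    rw [stripCond_snoc_iff]
    exact ⟨hwalk, fun j => (mem_Sp.mp (hyf'.1 j)).1,
      abs_sub_eq_one_of_TN_ne_zero (right_ne_zero_of_mul hne), hyf'.2⟩
  · rintro ⟨z, u⟩ hzu - ⟨z', u'⟩ hzu' - h
    simp only [Finset.mem_sigma, mem_filter_stripCond] at hzu hzu'
    obtain rfl : z = fun j => u j (Fin.last t) := (funext hzu.2.2.1).symm
    obtain rfl : z' = fun j => u' j (Fin.last t) := (funext hzu'.2.2.1).symm
    obtain rfl : u = u' := funext fun j => by
      simpa only [Fin.init_snoc] using congrArg Fin.init (congrFun h j)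
    rfl
  · intro y hy hne
    rw [mem_filter_stripCond] at hy
    have hsnoc : (fun j => Fin.snoc (Fin.init (y j)) (yf j)) = y :=
      funext fun j => by rw [← hy.2.1 j, Fin.snoc_init_self]
    rw [← hsnoc, stripCond_snoc_iff] at hy
    obtain ⟨hwalk, -, hstep, -⟩ := hy
    refine ⟨⟨fun j => Fin.init (y j) (Fin.last t), fun j => Fin.init (y j)⟩, ?_, ?_, hsnoc⟩
    · simp only [Finset.mem_sigma, mem_filter_stripCond]
      exact ⟨mem_UU.mpr ⟨fun j => mem_Sp_not_of_abs_sub_eq_one (hyf'.1 j) (hwalk.2.2.1 j _)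
        (hstep j), fun a b hab => hwalk.2.2.2.2 _ a b hab⟩, hwalk⟩
    · rwa [← hsnoc, walkWeight_snoc, ← TN_eq_prod hstep] at hne
  · rintro ⟨z, u⟩ hzu hne
    simp only [Finset.mem_sigma, mem_filter_stripCond] at hzu
    obtain rfl : z = fun j => u j (Fin.last t) := (funext hzu.2.2.1).symm
    rw [walkWeight_snoc, ← TN_eq_prod (abs_sub_eq_one_of_TN_ne_zero (right_ne_zero_of_mul hne))]

theorem Zgen_spectral_formula_general (L : ℤ) (w : ℤ → ℤ → ℂ) (v : ℤ → ℂ)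
    (K : Type*) [Fintype K] [LinearOrder K]
    (φ ψ : Bool → K → ℤ → ℂ) (lam : K → ℂ)
    (heo : ∀ k, ∀ y ∈ SetE L, ∑ y' ∈ SetO L, T1 w y y' * φ true k y' = lam k * φ false k y)
    (hoe : ∀ k, ∀ y ∈ SetO L, ∑ y' ∈ SetE L, T1 w y y' * φ false k y' = lam k * φ true k y)
    (hort : ∀ (p : Bool) (k k' : K),
      ∑ y ∈ Sp L p, star (ψ p k y) * φ p k' y = if k = k' then 1 else 0)
    (hcomp : ∀ (p : Bool), ∀ y ∈ Sp L p, ∀ y' ∈ Sp L p,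
      ∑ k : K, φ p k y * star (ψ p k y') = if y = y' then 1 else 0)
    (N : ℕ) (t : ℕ) (p : Bool) (yi yf : Fin N → ℤ)
    (hyi : yi ∈ UU (Sp L (if Even t then p else !p)) N) (hyf : yf ∈ UU (Sp L p) N) :
    Zgen L w v N t yi yf =
      (∏ a, v (yi a)) *
        ∑ k ∈ UU (Finset.univ : Finset K) N,
          BA (φ (if Even t then p else !p)) k yi * (∏ a, lam (k a)) ^ t *
            star (BA (ψ p) k yf) := by
  have hleft (q : Bool) (κ : K) : ∀ y' ∈ Sp L q,
      ∑ x ∈ Sp L (!q), star (ψ (!q) κ x) * T1 w x y' = lam κ * star (ψ q κ y') := by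
    refine fun y' hy' => sum_dual_mul_eq_of_eigen (φ' := φ q) ?_ (hort (!q)) (hcomp q) κ hy'
    cases q
    exacts [hoe, heo]
  simp_rw [star_BA]
  induction t generalizing p yf with
  | zero =>
    simp only [Even.zero, if_true, pow_zero, mul_one] at hyi ⊢
    obtain ⟨hyi_mem, hyi_mono⟩ := mem_UU.mp hyi
    rw [Zgen_zero w v (fun j => (mem_Sp.mp (hyi_mem j)).1) hyi_mono,
      sum_BA_mul_BA (hcomp p) hyi hyf]
    split_ifs <;> simp
  | succ t ih =>
    have hpar : (if Even (t + 1) then p else !p) = if Even t then !p else !!p := by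
      by_cases h : Even t <;> simp [h, Nat.even_add_one]
    rw [hpar] at hyi ⊢
    rw [Zgen_succ w v yi hyf, Finset.sum_congr rfl fun z hz => by rw [ih (!p) z hyi hz, mul_assoc],
      ← Finset.mul_sum, sum_sum_BA_mul_TN (hleft p) _ _ (mem_UU.mp hyf).1
        fun a b => add_two_le_of_mem_UU_Sp hyf]
    simp only [pow_succ, mul_assoc]

/-- spectral formula for the `N`-walk generating function (Lemma 3).
Parity is encoded by a Boolean: `true ↦ odd`, `false ↦ even`; `p' = p` for even `t` and
the opposite parity for odd `t`. -/
theorem Zgen_spectral_formula (L : ℤ) (hL : Odd L) (hL1 : 1 ≤ L) (w : ℤ → ℤ → ℂ) (v : ℤ → ℂ)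
    (K : Type*) [Fintype K] [LinearOrder K] (hK : Fintype.card K = ((L + 1) / 2).toNat)
    (φ ψ : Bool → K → ℤ → ℂ) (lam : K → ℂ)
    (heo : ∀ k, ∀ y ∈ SetE L, ∑ y' ∈ SetO L, T1 w y y' * φ true k y' = lam k * φ false k y)
    (hoe : ∀ k, ∀ y ∈ SetO L, ∑ y' ∈ SetE L, T1 w y y' * φ false k y' = lam k * φ true k y)
    (hort : ∀ (p : Bool) (k k' : K),
      ∑ y ∈ Sp L p, star (ψ p k y) * φ p k' y = if k = k' then 1 else 0)
    (hcomp : ∀ (p : Bool), ∀ y ∈ Sp L p, ∀ y' ∈ Sp L p,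
      ∑ k : K, φ p k y * star (ψ p k y') = if y = y' then 1 else 0)
    (N : ℕ) (hN : 1 ≤ N) (t : ℕ) (p : Bool) (yi yf : Fin N → ℤ)
    (hyi : yi ∈ UU (Sp L (if Even t then p else !p)) N) (hyf : yf ∈ UU (Sp L p) N) :
    Zgen L w v N t yi yf =
      (∏ a, v (yi a)) *
        ∑ k ∈ UU (Finset.univ : Finset K) N,
          BA (φ (if Even t then p else !p)) k yi * (∏ a, lam (k a)) ^ t *
            star (BA (ψ p) k yf) :=
  Zgen_spectral_formula_general L w v K φ ψ lam heo hoe hort hcomp N t p yi yf hyi hyf
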